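/- arXiv:1310.2346 — 3 statements merged into one kernel-verified Lean document; each statement's English description precedes it below -/
import Mathlib

section
/- Any real-valued logic that satisfies P2 is an extension of Łukasiewicz logic: if L = Taut(T,*) for some continuous t-norm * and algebra of truth values T, and L satisfies P2, then Taut([0,1],⊙) ⊆ L. -/
open Set

noncomputable section

/-- The real unit interval `[0,1]` as a subset of `ℝ`. -/
def I01 : Set ℝ := Set.Icc 0 1

/-- A continuous t-norm on `[0,1]`. -/
structure ContTNorm where
  mul : ℝ → ℝ → ℝ
  maps_to : ∀ x ∈ I01, ∀ y ∈ I01, mul x y ∈ I01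
  continuousOn : ContinuousOn (fun p : ℝ × ℝ => mul p.1 p.2) (I01 ×ˢ I01)
  assoc : ∀ x ∈ I01, ∀ y ∈ I01, ∀ z ∈ I01, mul (mul x y) z = mul x (mul y z)
  comm : ∀ x ∈ I01, ∀ y ∈ I01, mul x y = mul y x
  mono : ∀ a ∈ I01, ∀ b ∈ I01, ∀ c ∈ I01, b ≤ c → mul a b ≤ mul a c
  one_mul' : ∀ x ∈ I01, mul 1 x = x

/-- The residuum of a t-norm: `x →* y := sup { c ∈ [0,1] | x * c ≤ y }`. -/
def resid (t : ContTNorm) (x y : ℝ) : ℝ :=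
  sSup {c | c ∈ I01 ∧ t.mul x c ≤ y}

/-- An algebra of truth values for the t-norm `t`: a subset of `[0,1]` containing
`0` and `1` and closed under `t.mul` and its residuum. -/
structure TruthAlg (t : ContTNorm) where
  carrier : Set ℝ
  subset : carrier ⊆ I01
  zero_mem : (0:ℝ) ∈ carrier
  one_mem : (1:ℝ) ∈ carrier
  mul_mem : ∀ x ∈ carrier, ∀ y ∈ carrier, t.mul x y ∈ carrier
  resid_mem : ∀ x ∈ carrier, ∀ y ∈ carrier, resid t x y ∈ carrier

/-- Propositional formulas over countably many variables with `&`, `→`, `⊥`. -/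
inductive Formula : Type
  | var : ℕ → Formula
  | bot : Formula
  | conj : Formula → Formula → Formula
  | impl : Formula → Formula → Formula

/-- `α ↔ β := (α → β) & (β → α)`. -/
def Formula.iff (a b : Formula) : Formula := .conj (.impl a b) (.impl b a)

/-- The valuation determined by an assignment `v` of reals to the variables. -/
def eval (t : ContTNorm) (v : ℕ → ℝ) : Formula → ℝ
  | .var i => v i
  | .bot => 0
  | .conj a b => t.mul (eval t v a) (eval t v b)
  | .impl a b => resid t (eval t v a) (eval t v b)

/-- A valuation into `(T, t)` is (identified with) an assignment of values of `T`
to the propositional variables. -/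
def IsValuation (t : ContTNorm) (T : TruthAlg t) (v : ℕ → ℝ) : Prop :=
  ∀ i, v i ∈ T.carrier

/-- The logic induced by `(T, t)`: all formulas true to degree 1 under every valuation. -/
def Taut (t : ContTNorm) (T : TruthAlg t) : Set Formula :=
  {α | ∀ v : ℕ → ℝ, IsValuation t T v → eval t v α = 1}

/-- Principle P1. -/
def P1 (L : Set Formula) : Prop :=
  ∀ (t : ContTNorm) (T : TruthAlg t), Taut t T = L →
    ∀ α β : Formula,
      (Formula.iff α β ∈ L ↔
        ∀ v : ℕ → ℝ, IsValuation t T v → (eval t v α = 1 ↔ eval t v β = 1))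

/-- Principle P2. -/
def P2 (L : Set Formula) : Prop :=
  ∀ (t : ContTNorm) (T : TruthAlg t), Taut t T = L →
    ∀ v w : ℕ → ℝ, IsValuation t T v → IsValuation t T w → v ≠ w →
      ∃ α : Formula, 0 < eval t v α ∧ eval t w α = 0

/-- The Gödel t-norm: minimum. -/
def minT : ContTNorm where
  mul := fun x y => min x y
  maps_to := by
    rintro x ⟨hx0, hx1⟩ y ⟨hy0, hy1⟩
    exact ⟨le_min hx0 hy0, min_le_of_left_le hx1⟩
  continuousOn := (continuous_fst.min continuous_snd).continuousOn
  assoc := fun x _ y _ z _ => min_assoc x y z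
  comm := fun x _ y _ => min_comm x y
  mono := fun a _ b _ c _ h => min_le_min le_rfl h
  one_mul' := by rintro x ⟨hx0, hx1⟩; exact min_eq_right hx1

/-- The Łukasiewicz t-norm: `x ⊙ y = max 0 (x + y - 1)`. -/
def lukT : ContTNorm where
  mul := fun x y => max 0 (x + y - 1)
  maps_to := by
    rintro x ⟨hx0, hx1⟩ y ⟨hy0, hy1⟩
    exact ⟨le_max_left _ _, max_le zero_le_one (by linarith)⟩
  continuousOn :=
    (continuous_const.max ((continuous_fst.add continuous_snd).sub continuous_const)).continuousOn
  assoc := by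
    rintro x ⟨hx0, hx1⟩ y ⟨hy0, hy1⟩ z ⟨hz0, hz1⟩
    simp only [max_def]
    split_ifs <;> linarith
  comm := by intro x _ y _; rw [add_comm]
  mono := by
    rintro a _ b _ c _ h
    exact max_le_max le_rfl (by linarith)
  one_mul' := by
    rintro x ⟨hx0, hx1⟩
    rw [show (1:ℝ) + x - 1 = x by ring, max_eq_right hx0]

/-- The product t-norm: ordinary multiplication. -/
def prodT : ContTNorm where
  mul := fun x y => x * y
  maps_to := by
    rintro x ⟨hx0, hx1⟩ y ⟨hy0, hy1⟩
    exact ⟨mul_nonneg hx0 hy0, by nlinarith⟩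
  continuousOn := (continuous_fst.mul continuous_snd).continuousOn
  assoc := fun x _ y _ z _ => mul_assoc x y z
  comm := fun x _ y _ => mul_comm x y
  mono := by rintro a ⟨ha0, _⟩ b _ c _ h; exact mul_le_mul_of_nonneg_left h ha0
  one_mul' := fun x _ => one_mul x

lemma ContTNorm.mul_zero' (t : ContTNorm) {x : ℝ} (hx : x ∈ I01) : t.mul x 0 = 0 := by
  have h01 : (0:ℝ) ∈ I01 := ⟨le_rfl, zero_le_one⟩
  have h11 : (1:ℝ) ∈ I01 := ⟨zero_le_one, le_rfl⟩
  have h1 : t.mul x 0 = t.mul 0 x := t.comm x hx 0 h01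
  have h2 : t.mul 0 x ≤ t.mul 0 1 := t.mono 0 h01 x hx 1 h11 hx.2
  have h3 : t.mul 0 1 = t.mul 1 0 := t.comm 0 h01 1 h11
  have h4 : t.mul 1 0 = 0 := t.one_mul' 0 h01
  have h5 : t.mul x 0 ∈ I01 := t.maps_to x hx 0 h01
  rw [h3, h4] at h2
  rw [h1] at h5 ⊢
  exact le_antisymm h2 h5.1

lemma resid_mem_I01 (t : ContTNorm) {x y : ℝ} (hx : x ∈ I01) (hy : y ∈ I01) :
    resid t x y ∈ I01 := by
  have h01 : (0:ℝ) ∈ I01 := ⟨le_rfl, zero_le_one⟩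
  have h0 : (0:ℝ) ∈ {c | c ∈ I01 ∧ t.mul x c ≤ y} :=
    ⟨h01, by rw [t.mul_zero' hx]; exact hy.1⟩
  have hbdd : BddAbove {c | c ∈ I01 ∧ t.mul x c ≤ y} := ⟨1, fun c hc => hc.1.2⟩
  constructor
  · exact le_csSup hbdd h0
  · exact csSup_le ⟨0, h0⟩ fun c hc => hc.1.2

/-- The full algebra of truth values `[0,1]` for a t-norm `t`. -/
def fullAlg (t : ContTNorm) : TruthAlg t where
  carrier := I01
  subset := le_rfl
  zero_mem := ⟨le_rfl, zero_le_one⟩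
  one_mem := ⟨zero_le_one, le_rfl⟩
  mul_mem := t.maps_to
  resid_mem := fun _ hx _ hy => resid_mem_I01 t hx hy

lemma resid_eq_one_of_le (t : ContTNorm) {x y : ℝ} (hx : x ∈ I01) (hy : y ∈ I01)
    (hxy : x ≤ y) : resid t x y = 1 := by
  have h11 : (1:ℝ) ∈ I01 := ⟨zero_le_one, le_rfl⟩
  have hmul : t.mul x 1 = x := by rw [t.comm x hx 1 h11]; exact t.one_mul' x hx
  have h1 : (1:ℝ) ∈ {c | c ∈ I01 ∧ t.mul x c ≤ y} := ⟨h11, by rw [hmul]; exact hxy⟩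
  have hbdd : BddAbove {c | c ∈ I01 ∧ t.mul x c ≤ y} := ⟨1, fun c hc => hc.1.2⟩
  exact le_antisymm (csSup_le ⟨1, h1⟩ fun c hc => hc.1.2) (le_csSup hbdd h1)

lemma resid_one_zero (t : ContTNorm) : resid t 1 0 = 0 := by
  have : {c | c ∈ I01 ∧ t.mul 1 c ≤ 0} = {0} := by
    ext c
    constructor
    · rintro ⟨hc, hle⟩
      have := t.one_mul' c hc
      have := hc.1
      simp only [Set.mem_singleton_iff]
      linarith [this, (t.one_mul' c hc) ▸ hle]
    · rintro rfl
      exact ⟨⟨le_rfl, zero_le_one⟩, by rw [t.mul_zero' ⟨zero_le_one, le_rfl⟩]⟩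
  rw [resid, this, csSup_singleton]

/-- The two-element algebra of truth values `{0,1}`. -/
def boolAlg (t : ContTNorm) : TruthAlg t where
  carrier := {0, 1}
  subset := by
    rintro x (rfl | rfl)
    · exact ⟨le_rfl, zero_le_one⟩
    · exact ⟨zero_le_one, le_rfl⟩
  zero_mem := Or.inl rfl
  one_mem := Or.inr rfl
  mul_mem := by
    have h01 : (0:ℝ) ∈ I01 := ⟨le_rfl, zero_le_one⟩
    have h11 : (1:ℝ) ∈ I01 := ⟨zero_le_one, le_rfl⟩
    rintro x (rfl | rfl) y (rfl | rfl)
    · exact Or.inl (t.mul_zero' h01)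
    · exact Or.inl (by rw [t.comm 0 h01 1 h11]; exact t.mul_zero' h11)
    · exact Or.inl (t.mul_zero' h11)
    · exact Or.inr (t.one_mul' 1 h11)
  resid_mem := by
    have h01 : (0:ℝ) ∈ I01 := ⟨le_rfl, zero_le_one⟩
    have h11 : (1:ℝ) ∈ I01 := ⟨zero_le_one, le_rfl⟩
    rintro x (rfl | rfl) y (rfl | rfl)
    · exact Or.inr (resid_eq_one_of_le t h01 h01 le_rfl)
    · exact Or.inr (resid_eq_one_of_le t h01 h11 zero_le_one)
    · exact Or.inl (resid_one_zero t)
    · exact Or.inr (resid_eq_one_of_le t h11 h11 le_rfl)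

/-- Classical logic: the logic induced by the two-element algebra `{0,1}`
(this is independent of the chosen continuous t-norm). -/
def ClassicalLogic : Set Formula := Taut minT (boolAlg minT)

/-!
Call `x ∈ (0, 1)` robust if `t x c > 0` whenever `c > 0`. Under a valuation by robust values a
formula evaluates to `0` exactly when it does under the constant valuation `1`, so P2 forbids
robust values in `T`: every element of `T \ {0, 1}` is a zero divisor of `t`.

If `t` has no zero divisors, then `T = {0, 1}`, where all t-norms and residua agree with
Łukasiewicz's. Otherwise the zero divisors fill `(0, β)` for an idempotent `β`, and `[0, β]` is a
compact connected ordered monoid in which every element below the unit `β` is a zero divisor. Its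
negation `¬x = max {c | x c = 0}` is an involution with a fixed point `u₀`; iterated square roots
`uₙ₊₁ ^ 2 = uₙ` give dyadic grids `uₙ ^ k`, `k ≤ 2 ^ (n + 1)`, and locating `x` on these grids
yields `φ : [0, β] → [0, 1]` with `φ (x y) = max 0 (φ x + φ y - 1)` and `φ ¬x = 1 - φ x`. As
`x → y = ¬(x ¬y)` on `[0, β]`, `φ` composed with the clamp to `[0, β]` is a homomorphism from
`([0, 1], t)` to `([0, 1], ⊙)` sending only the values `≥ β` to `1`. Since `T ∩ [β, 1) = ∅`,
every Łukasiewicz tautology takes the value `1` under every valuation into `T`.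
-/

open Filter Topology

theorem Antitone.exists_apply_eq_self_of_involutive {α : Type*} [CompleteLinearOrder α]
    [DenselyOrdered α] {f : α → α} (hf : Antitone f) (hinv : Function.Involutive f) :
    ∃ a, f a = a := by
  set S := {x | x ≤ f x}
  have hle : ∀ x ∈ S, sSup S ≤ f x := fun x hx =>
    sSup_le fun y hy => (le_total y x).elim (fun h => h.trans hx) (fun h => le_trans hy (hf h))
  have hmem : sSup S ≤ f (sSup S) := sSup_le fun x hx => by simpa [hinv x] using hf (hle x hx)
  refine ⟨sSup S, by_contra fun hne => ?_⟩
  obtain ⟨m, ham, hmfa⟩ := exists_between (lt_of_le_of_ne hmem (Ne.symm hne))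
  have hfm : f m < m := not_le.mp fun h => (le_sSup (show m ∈ S from h)).not_gt ham
  have hafm : sSup S < f m :=
    lt_of_le_of_ne (by simpa [hinv _] using hf hmfa.le) fun h => hmfa.ne (by rw [h, hinv m])
  have hffm : f (f m) < f m := not_le.mp fun h => (le_sSup (show f m ∈ S from h)).not_gt hafm
  rw [hinv m] at hffm
  exact (hfm.trans hffm).false

/-- The multiplication of `M` is a t-norm with unit the top element, and every element below
the top is a zero divisor. -/
class IsNilpotentTNorm (M : Type*) [CommMonoidWithZero M] [Preorder M] : Prop where
  le_one : ∀ x : M, x ≤ 1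
  exists_ne_zero_mul_eq_zero : ∀ x : M, x < 1 → ∃ c ≠ 0, x * c = 0

namespace NilpotentTNorm

def scale (n : ℕ) : ℕ := 2 ^ (n + 1)

theorem two_le_scale (n : ℕ) : 2 ≤ scale n :=
  le_self_pow₀ one_le_two (Nat.succ_ne_zero n)

theorem scale_succ (n : ℕ) : scale (n + 1) = 2 * scale n := by
  rw [scale, scale, pow_succ, mul_comm]

theorem scale_pos (n : ℕ) : (0 : ℝ) < scale n := by
  have := two_le_scale n
  positivity

theorem tendsto_inv_scale : Tendsto (fun n => ((scale n : ℕ) : ℝ)⁻¹) atTop (𝓝 0) := by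
  simp only [scale, Nat.cast_pow, Nat.cast_ofNat]
  exact tendsto_inv_atTop_zero.comp
    ((tendsto_pow_atTop_atTop_of_one_lt one_lt_two).comp (tendsto_add_atTop_nat 1))

theorem eq_of_tendsto_of_abs_sub_le {a b : ℕ → ℝ} {A B C : ℝ} (ha : Tendsto a atTop (𝓝 A))
    (hb : Tendsto b atTop (𝓝 B)) (h : ∀ n, |a n - b n| ≤ C / scale n) : A = B :=
  tendsto_nhds_unique ha <| hb.congr_dist <| squeeze_zero (g := fun n => C / scale n)
    (fun _ => dist_nonneg)
    (fun n => by rw [dist_comm, Real.dist_eq]; exact h n)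
    (by simpa [div_eq_mul_inv] using tendsto_inv_scale.const_mul C)

variable {M : Type*} [CommMonoidWithZero M] [CompleteLinearOrder M]

section Order

variable [IsNilpotentTNorm M]

theorem le_one (x : M) : x ≤ 1 := IsNilpotentTNorm.le_one x

variable [IsOrderedMonoid M]

theorem zero_le (x : M) : 0 ≤ x :=
  calc (0 : M) = ⊥ * 0 := (mul_zero _).symm
    _ ≤ ⊥ * 1 := mul_le_mul_right (le_one 0) _
    _ = ⊥ := mul_one _
    _ ≤ x := bot_le

theorem mul_le_left (x y : M) : x * y ≤ x := mul_le_of_le_one_right' (le_one y)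

theorem pow_antitone (x : M) : Antitone (x ^ · : ℕ → M) := fun _ _ h =>
  pow_le_pow_right_of_le_one' (le_one x) h

end Order

variable [TopologicalSpace M] [OrderTopology M] [ContinuousMul M]

/-- The negation `x → 0`. -/
def tneg (x : M) : M := sSup {c | x * c = 0}

theorem mul_tneg_self (x : M) : x * tneg x = 0 :=
  show tneg x ∈ {c | x * c = 0} from IsClosed.sSup_mem ⟨0, mul_zero x⟩
    (isClosed_eq (continuous_const.mul continuous_id) continuous_const)

theorem tneg_one : tneg (1 : M) = 0 := by simpa using mul_tneg_self (1 : M)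

variable [IsNilpotentTNorm M]

theorem tneg_lt_one {x : M} (hx : x ≠ 0) : tneg x < 1 :=
  (le_one _).lt_of_ne fun h => hx (by simpa [h] using mul_tneg_self x)

variable [IsOrderedMonoid M]

theorem le_tneg_iff {x c : M} : c ≤ tneg x ↔ x * c = 0 :=
  ⟨fun h => le_antisymm ((mul_le_mul_right h x).trans (mul_tneg_self x).le) (zero_le _),
    fun h => le_sSup h⟩

theorem tneg_antitone : Antitone (tneg : M → M) := fun _ y hxy =>
  le_tneg_iff.2 <| le_antisymm ((mul_le_mul_left hxy _).trans (mul_tneg_self y).le) (zero_le _)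

theorem tneg_zero : tneg (0 : M) = 1 := le_antisymm (le_one _) (le_tneg_iff.2 (zero_mul 1))

theorem tneg_ne_zero {x : M} (hx : x < 1) : tneg x ≠ 0 := fun h => by
  obtain ⟨c, hc0, hc⟩ := IsNilpotentTNorm.exists_ne_zero_mul_eq_zero x hx
  exact hc0 (le_antisymm (h ▸ le_tneg_iff.2 hc) (zero_le c))

variable [DenselyOrdered M]

theorem exists_mul_eq_of_le {x y : M} (h : y ≤ x) : ∃ c, x * c = y :=
  intermediate_value_univ 0 1 (continuous_const.mul continuous_id : Continuous (x * ·))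
    ⟨by simpa using zero_le y, by simpa using h⟩

theorem exists_mul_self_eq (y : M) : ∃ s, s * s = y :=
  intermediate_value_univ 0 1 (continuous_id.mul continuous_id)
    ⟨by simpa using zero_le y, by simpa using le_one y⟩

theorem mul_eq_min_of_mul_self_eq {e : M} (he : e * e = e) (c : M) : e * c = min e c := by
  rcases le_total e c with h | h
  · rw [min_eq_left h]
    refine le_antisymm (mul_le_left e c) ?_
    calc e = e * e := he.symm
      _ ≤ e * c := mul_le_mul_right h e
  · obtain ⟨d, rfl⟩ := exists_mul_eq_of_le h
    rw [min_eq_right h, ← mul_assoc, he]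

theorem eq_zero_or_eq_one_of_mul_self_eq {e : M} (he : e * e = e) : e = 0 ∨ e = 1 := by
  refine or_iff_not_imp_right.2 fun h1 => ?_
  obtain ⟨c, hc0, hc⟩ := IsNilpotentTNorm.exists_ne_zero_mul_eq_zero e ((le_one e).lt_of_ne h1)
  rw [mul_eq_min_of_mul_self_eq he] at hc
  exact (min_choice e c).elim (fun h => h ▸ hc) fun h => absurd (h ▸ hc) hc0

theorem tendsto_pow_atTop_nhds_zero {x : M} (hx : x < 1) :
    Tendsto (x ^ ·) atTop (𝓝 0) := by
  have hlim := tendsto_atTop_iInf (pow_antitone x)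
  have hdouble : Tendsto (fun n => x ^ n * x ^ n) atTop (𝓝 (⨅ n, x ^ n)) := by
    simpa only [Function.comp_def, ← pow_add] using
      hlim.comp (tendsto_atTop_mono (fun n => Nat.le_add_left n n) tendsto_id)
  have hidem := tendsto_nhds_unique (hlim.mul hlim) hdouble
  have hlt : ⨅ n, x ^ n < 1 := (iInf_le _ 1).trans_lt (by simpa using hx)
  rwa [(eq_zero_or_eq_one_of_mul_self_eq hidem).resolve_right hlt.ne] at hlim

theorem mul_lt_mul_of_ne_zero {x c d : M} (hcd : c < d) (h : x * d ≠ 0) : x * c < x * d := by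
  refine (mul_le_mul_right hcd.le x).lt_of_ne fun hxc => h ?_
  obtain ⟨e, rfl⟩ := exists_mul_eq_of_le hcd.le
  have he : e < 1 := (le_one e).lt_of_ne (by rintro rfl; simp at hcd)
  have hconst : ∀ n, x * d * e ^ n = x * d := fun n => by
    induction n with
    | zero => simp
    | succ n ih => rw [pow_succ, ← mul_assoc, ih, mul_assoc, hxc]
  have hlim := (tendsto_const_nhds (x := x * d)).mul (tendsto_pow_atTop_nhds_zero he)
  simp only [hconst, mul_zero] at hlim
  exact tendsto_nhds_unique tendsto_const_nhds hlim

theorem tneg_tneg (x : M) : tneg (tneg x) = x := by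
  rcases (zero_le x).eq_or_lt with rfl | hx0
  · rw [tneg_zero, tneg_one]
  refine ((le_tneg_iff.2 (by rw [mul_comm, mul_tneg_self])).lt_or_eq.resolve_left
    fun hlt => ?_).symm
  obtain ⟨c, hc⟩ := exists_mul_eq_of_le hlt.le
  have hc1 : c < 1 := (le_one c).lt_of_ne (by rintro rfl; rw [mul_one] at hc; exact hlt.ne' hc)
  have hneg : tneg (tneg (tneg x)) = tneg x :=
    le_antisymm (tneg_antitone hlt.le) (le_tneg_iff.2 (by rw [mul_comm, mul_tneg_self]))
  -- multiplication by `c` keeps every element above `tneg x` above it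
  have hstep : ∀ d, tneg x < d → tneg x < c * d := fun d hd => not_le.1 fun h =>
    hd.not_ge (le_tneg_iff.2 (by rw [← hc, mul_assoc, ← le_tneg_iff, hneg]; exact h))
  have hpow : ∀ n, tneg x < c ^ n := fun n => by
    induction n with
    | zero => simpa using tneg_lt_one hx0.ne'
    | succ n ih => rw [pow_succ']; exact hstep _ ih
  obtain ⟨n, hn⟩ := ((tendsto_pow_atTop_nhds_zero hc1).eventually_lt_const
    ((zero_le _).lt_of_ne (tneg_ne_zero (hlt.trans_le (le_one _))).symm)).exists
  exact (hpow n).not_gt hn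

theorem tneg_involutive : Function.Involutive (tneg : M → M) := tneg_tneg

theorem mul_le_iff_le_tneg {x y c : M} : x * c ≤ y ↔ c ≤ tneg (x * tneg y) := by
  conv_lhs => rw [← tneg_tneg y]
  rw [le_tneg_iff, le_tneg_iff, mul_left_comm, ← mul_assoc]

theorem tneg_le_tneg_mul_of_mul_self_eq {s y : M} (hs : s * s = y) (hy : y ≠ 0) :
    tneg s ≤ tneg y * s := by
  obtain ⟨e, he⟩ := exists_mul_eq_of_le
    (le_tneg_iff.2 (by rw [← hs, mul_assoc, mul_tneg_self, mul_zero]) : tneg s ≤ tneg y)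
  rcases le_total e s with hes | hse
  · exact he ▸ mul_le_mul_right hes _
  -- otherwise `s * e` is squeezed between `s * s = y` and `y`, and cancellation gives `e = s`
  have hey : s * e ≤ y := by
    rw [← tneg_tneg y, le_tneg_iff, mul_left_comm, he, mul_tneg_self]
  have hse' : s * s = s * e := le_antisymm (mul_le_mul_right hse s) (hs ▸ hey)
  obtain rfl : e = s := by
    by_contra hne
    exact (mul_lt_mul_of_ne_zero ((hse.lt_of_ne (Ne.symm hne))) (hse' ▸ hs ▸ hy)).ne hse'
  exact he.ge

/-- `dyadic n` plays the role of `1 - 1 / scale n`; its powers form the `n`-th dyadic grid. -/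
def dyadic : ℕ → M
  | 0 => (tneg_antitone.exists_apply_eq_self_of_involutive tneg_involutive).choose
  | n + 1 => (exists_mul_self_eq (dyadic n)).choose

theorem dyadic_succ_mul_self (n : ℕ) : dyadic (n + 1) * dyadic (n + 1) = (dyadic n : M) :=
  (exists_mul_self_eq _).choose_spec

/-- `level n x / scale n` is the Łukasiewicz value of `x` rounded up to the `n`-th grid. -/
def level (n : ℕ) (x : M) : ℕ := sInf {m | x ≤ dyadic n ^ (scale n - m)}

theorem level_le_iff {n m : ℕ} {x : M} : level n x ≤ m ↔ x ≤ dyadic n ^ (scale n - m) := by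
  have hmem : scale n ∈ {m | x ≤ (dyadic n : M) ^ (scale n - m)} := by simp [le_one]
  exact ⟨fun h => (Nat.sInf_mem ⟨_, hmem⟩ : x ≤ dyadic n ^ (scale n - level n x)).trans
    (pow_antitone _ (Nat.sub_le_sub_left h _)), fun h => Nat.sInf_le h⟩

theorem lt_level_iff {n m : ℕ} {x : M} : m < level n x ↔ dyadic n ^ (scale n - m) < x := by
  rw [← not_le, level_le_iff, not_le]

theorem level_le_scale (n : ℕ) (x : M) : level n x ≤ scale n := level_le_iff.2 (by simp [le_one])

theorem level_zero (n : ℕ) : level n (0 : M) = 0 := Nat.le_zero.1 (level_le_iff.2 (zero_le _))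

theorem level_succ_le (n : ℕ) (x : M) : level (n + 1) x ≤ 2 * level n x := by
  have := level_le_scale n x
  rw [level_le_iff, scale_succ,
    (by omega : 2 * scale n - 2 * level n x = 2 * (scale n - level n x)), pow_mul, sq,
    dyadic_succ_mul_self]
  exact level_le_iff.1 le_rfl

theorem level_mul_le (n : ℕ) (x y : M) :
    level n (x * y) ≤ level n x + level n y - scale n := by
  have := level_le_scale n x
  have := level_le_scale n y
  refine level_le_iff.2 ?_
  calc x * y ≤ dyadic n ^ (scale n - level n x) * dyadic n ^ (scale n - level n y) :=
        mul_le_mul' (level_le_iff.1 le_rfl) (level_le_iff.1 le_rfl)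
    _ ≤ _ := by rw [← pow_add]; exact pow_antitone _ (by omega)

def approx (n : ℕ) (x : M) : ℝ := level n x / scale n

def toLuk (x : M) : ℝ := ⨅ n, approx n x

theorem approx_nonneg (n : ℕ) (x : M) : 0 ≤ approx n x :=
  div_nonneg (Nat.cast_nonneg _) (scale_pos n).le

theorem approx_le_one (n : ℕ) (x : M) : approx n x ≤ 1 :=
  div_le_one_of_le₀ (by exact_mod_cast level_le_scale n x) (scale_pos n).le

theorem approx_antitone (x : M) : Antitone (approx · x) := by
  refine antitone_nat_of_succ_le fun n => ?_
  rw [approx, approx, scale_succ, Nat.cast_mul, Nat.cast_two,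
    div_le_div_iff₀ (by positivity [scale_pos n]) (scale_pos n)]
  have : (level (n + 1) x : ℝ) ≤ 2 * level n x := by exact_mod_cast level_succ_le n x
  nlinarith [scale_pos n]

theorem bddBelow_approx (x : M) : BddBelow (range (approx · x)) :=
  ⟨0, by rintro _ ⟨n, rfl⟩; exact approx_nonneg n x⟩

theorem tendsto_approx (x : M) : Tendsto (approx · x) atTop (𝓝 (toLuk x)) :=
  tendsto_atTop_ciInf (approx_antitone x) (bddBelow_approx x)

theorem toLuk_zero : toLuk (0 : M) = 0 := by
  simp [toLuk, approx, level_zero]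

theorem toLuk_nonneg (x : M) : 0 ≤ toLuk x := le_ciInf fun n => approx_nonneg n x

theorem toLuk_le_one (x : M) : toLuk x ≤ 1 :=
  (ciInf_le (bddBelow_approx x) 0).trans (approx_le_one 0 x)

variable [Nontrivial M]

theorem dyadic_pow_scale_and_tneg_dyadic (n : ℕ) :
    (dyadic n : M) ^ scale n = 0 ∧ tneg (dyadic n : M) = dyadic n ^ (scale n - 1) := by
  induction n with
  | zero =>
    have h : tneg (dyadic 0 : M) = dyadic 0 :=
      (tneg_antitone.exists_apply_eq_self_of_involutive tneg_involutive).choose_spec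
    refine ⟨?_, by simpa [scale] using h⟩
    rw [scale, zero_add, pow_one, sq]
    nth_rw 2 [← h]
    exact mul_tneg_self _
  | succ n ih =>
    set s : M := dyadic (n + 1)
    have hsq : s ^ 2 = dyadic n := by rw [sq]; exact dyadic_succ_mul_self n
    have hK := two_le_scale n
    have hzero : s ^ scale (n + 1) = 0 := by rw [scale_succ, pow_mul, hsq, ih.1]
    have hy : (dyadic n : M) ≠ 0 := fun h => by
      simpa [h, tneg_zero, zero_pow (by omega : scale n - 1 ≠ 0)] using ih.2
    refine ⟨hzero, le_antisymm ?_ (le_tneg_iff.2 ?_)⟩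
    · calc tneg s ≤ tneg (dyadic n) * s :=
          tneg_le_tneg_mul_of_mul_self_eq (dyadic_succ_mul_self n) hy
        _ = s ^ (2 * (scale n - 1) + 1) := by rw [ih.2, ← hsq, ← pow_mul, pow_succ]
        _ = s ^ (scale (n + 1) - 1) := by rw [scale_succ]; congr 1; omega
    · rw [← pow_succ', Nat.sub_add_cancel (by rw [scale_succ]; omega), hzero]

theorem dyadic_pow_scale (n : ℕ) : (dyadic n : M) ^ scale n = 0 :=
  (dyadic_pow_scale_and_tneg_dyadic n).1

theorem tneg_dyadic (n : ℕ) : tneg (dyadic n : M) = dyadic n ^ (scale n - 1) :=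
  (dyadic_pow_scale_and_tneg_dyadic n).2

theorem dyadic_lt_one (n : ℕ) : (dyadic n : M) < 1 :=
  (le_one _).lt_of_ne fun h => by simpa [h] using dyadic_pow_scale (M := M) n

theorem dyadic_pow_ne_zero {n k : ℕ} (hk : k < scale n) : (dyadic n : M) ^ k ≠ 0 := by
  intro h
  refine tneg_ne_zero (dyadic_lt_one (M := M) n) (le_antisymm ?_ (zero_le _))
  rw [tneg_dyadic, ← h]
  exact pow_antitone _ (by omega)

theorem dyadic_pow_lt_pow {n j k : ℕ} (hjk : j < k) (hk : k ≤ scale n) :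
    (dyadic n : M) ^ k < dyadic n ^ j :=
  calc (dyadic n : M) ^ k ≤ dyadic n ^ j * dyadic n := by rw [← pow_succ]; exact pow_antitone _ hjk
    _ < dyadic n ^ j * 1 :=
      mul_lt_mul_of_ne_zero (dyadic_lt_one n) (by rw [mul_one]; exact dyadic_pow_ne_zero (by omega))
    _ = dyadic n ^ j := mul_one _

theorem le_pow_of_mul_le_pow_succ {n m : ℕ} {c : M} (hm : m < scale n)
    (h : dyadic n * c ≤ dyadic n ^ (m + 1)) : c ≤ dyadic n ^ m := by
  by_contra! hlt
  rcases eq_or_ne (dyadic n * c) 0 with h0 | h0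
  · refine hlt.not_ge ((le_tneg_iff.2 h0).trans ?_)
    rw [tneg_dyadic]
    exact pow_antitone _ (by omega)
  · exact (mul_lt_mul_of_ne_zero hlt h0).not_ge (by rwa [← pow_succ'])

theorem tneg_dyadic_pow {n j k : ℕ} (h : j + k = scale n) :
    tneg ((dyadic n : M) ^ k) = dyadic n ^ j := by
  induction k generalizing j with
  | zero => rw [pow_zero, tneg_one, (by omega : j = scale n), dyadic_pow_scale]
  | succ k ih =>
    refine le_antisymm (le_pow_of_mul_le_pow_succ (by omega) ?_) (le_tneg_iff.2 ?_)
    · rw [← ih (by omega : j + 1 + k = scale n), le_tneg_iff, ← mul_assoc, ← pow_succ,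
        mul_tneg_self]
    · rw [← pow_add, (by omega : k + 1 + j = scale n), dyadic_pow_scale]

theorem exists_lt_dyadic {x : M} (hx : x < 1) : ∃ n, x < dyadic n := by
  have hlim := tendsto_atTop_iSup (monotone_nat_of_le_succ fun n =>
    (dyadic_succ_mul_self (M := M) n).symm.trans_le (mul_le_left _ _))
  have hidem : (⨆ n, (dyadic n : M)) * ⨆ n, dyadic n = ⨆ n, dyadic n :=
    tendsto_nhds_unique (((hlim.comp (tendsto_add_atTop_nat 1)).mul
      (hlim.comp (tendsto_add_atTop_nat 1))).congr fun n => dyadic_succ_mul_self n) hlim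
  have hne : (⨆ n, (dyadic n : M)) ≠ 0 := fun h =>
    dyadic_pow_ne_zero (M := M) (n := 0) (k := 1) (by simp [scale])
      (by rw [pow_one]; exact le_antisymm (h ▸ le_iSup _ 0) (zero_le _))
  rw [← (eq_zero_or_eq_one_of_mul_self_eq hidem).resolve_left hne] at hx
  exact lt_iSup_iff.1 hx

theorem level_add_level_le (n : ℕ) (x y : M) :
    level n x + level n y ≤ level n (x * y) + scale n + 2 := by
  have := level_le_scale n x
  have := level_le_scale n y
  by_contra! h
  have hx : dyadic n ^ (scale n - (level n x - 1)) < x := lt_level_iff.1 (by omega)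
  have hy : dyadic n ^ (scale n - (level n y - 1)) < y := lt_level_iff.1 (by omega)
  have hxy : x * y ≤ dyadic n ^ (scale n - level n (x * y)) := level_le_iff.1 le_rfl
  refine (hxy.trans_lt (dyadic_pow_lt_pow ?_ (Nat.sub_le _ _))).not_ge
    (pow_add (dyadic n : M) _ _ ▸ mul_le_mul' hx.le hy.le)
  omega

theorem level_tneg_add_le (n : ℕ) (x : M) : level n (tneg x) + level n x ≤ scale n + 1 := by
  have := level_le_scale n x
  rcases Nat.eq_zero_or_pos (level n x) with h0 | hpos
  · have := level_le_scale n (tneg x)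
    omega
  have hx : dyadic n ^ (scale n - (level n x - 1)) < x := lt_level_iff.1 (by omega)
  have : level n (tneg x) ≤ scale n - (level n x - 1) := by
    rw [level_le_iff, Nat.sub_sub_self (by omega),
      ← tneg_dyadic_pow (by omega : level n x - 1 + (scale n - (level n x - 1)) = scale n)]
    exact tneg_antitone hx.le
  omega

theorem scale_le_level_tneg_add (n : ℕ) (x : M) : scale n ≤ level n (tneg x) + level n x := by
  have hb := level_le_scale n (tneg x)
  rcases hb.eq_or_lt with hK | hlt
  · omega
  have hpow : dyadic n ^ level n (tneg x) ≤ x :=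
    calc dyadic n ^ level n (tneg x) = tneg (dyadic n ^ (scale n - level n (tneg x))) :=
          (tneg_dyadic_pow (by omega)).symm
      _ ≤ tneg (tneg x) := tneg_antitone (level_le_iff.1 le_rfl)
      _ = x := tneg_tneg x
  have : scale n - (level n (tneg x) + 1) < level n x := lt_level_iff.2 <| by
    rw [Nat.sub_sub_self (by omega)]
    exact (dyadic_pow_lt_pow (Nat.lt_succ_self _) (by omega)).trans_le hpow
  omega

theorem toLuk_lt_one {x : M} (hx : x < 1) : toLuk x < 1 := by
  obtain ⟨n, hn⟩ := exists_lt_dyadic hx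
  have hK := two_le_scale n
  have hlevel : level n x ≤ scale n - 1 :=
    level_le_iff.2 (by rw [Nat.sub_sub_self (by omega), pow_one]; exact hn.le)
  calc toLuk x ≤ approx n x := ciInf_le (bddBelow_approx x) n
    _ < 1 := by
      rw [approx, div_lt_one (scale_pos n)]
      exact_mod_cast hlevel.trans_lt (by omega)

theorem toLuk_mul (x y : M) : toLuk (x * y) = max 0 (toLuk x + toLuk y - 1) := by
  refine eq_of_tendsto_of_abs_sub_le (C := 2) (tendsto_approx _)
    (tendsto_const_nhds.max (((tendsto_approx x).add (tendsto_approx y)).sub_const 1)) fun n => ?_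
  have hK := scale_pos n
  have hupper : approx n (x * y) ≤ max 0 (approx n x + approx n y - 1) := by
    have h := level_mul_le n x y
    rcases le_total (level n x + level n y) (scale n) with hle | hle
    · rw [approx, Nat.eq_zero_of_le_zero (h.trans (Nat.sub_eq_zero_of_le hle).le)]
      simp
    · refine le_max_of_le_right ?_
      rw [approx, approx, approx, ← add_div, div_sub_one hK.ne',
        div_le_div_iff_of_pos_right hK]
      have := (Nat.cast_le (α := ℝ)).2 h
      rwa [Nat.cast_sub hle, Nat.cast_add] at this
  have hlower : approx n x + approx n y - 1 ≤ approx n (x * y) + 2 / scale n := by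
    rw [approx, approx, approx, ← add_div, div_sub_one hK.ne', ← add_div,
      div_le_div_iff_of_pos_right hK]
    have : (level n x + level n y : ℝ) ≤ level n (x * y) + scale n + 2 := by
      exact_mod_cast level_add_level_le n x y
    linarith
  have hstep : 0 ≤ 2 / (scale n : ℝ) := div_nonneg zero_le_two hK.le
  refine abs_sub_le_iff.2 ⟨by linarith, sub_le_iff_le_add'.2 (max_le ?_ hlower)⟩
  linarith [approx_nonneg n (x * y)]

theorem toLuk_tneg (x : M) : toLuk (tneg x) = 1 - toLuk x := by
  refine eq_of_tendsto_of_abs_sub_le (C := 1) (tendsto_approx _)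
    (tendsto_const_nhds.sub (tendsto_approx x)) fun n => ?_
  have hK := scale_pos n
  have h1 : (level n (tneg x) + level n x : ℝ) ≤ scale n + 1 := by
    exact_mod_cast level_tneg_add_le n x
  have h2 : (scale n : ℝ) ≤ level n (tneg x) + level n x := by
    exact_mod_cast scale_le_level_tneg_add n x
  rw [approx, approx, one_sub_div hK.ne', ← sub_div, abs_div, abs_of_pos hK,
    div_le_div_iff_of_pos_right hK, abs_le]
  constructor <;> linarith

theorem toLuk_tneg_mul_tneg (x y : M) :
    toLuk (tneg (x * tneg y)) = min 1 (1 - toLuk x + toLuk y) := by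
  rw [toLuk_tneg, toLuk_mul, toLuk_tneg]
  rcases le_total (toLuk x) (toLuk y) with h | h
  · rw [max_eq_left (by linarith), min_eq_left (by linarith)]
    ring
  · rw [max_eq_right (by linarith), min_eq_right (by linarith)]
    ring

end NilpotentTNorm

theorem zero_mem_I01 : (0 : ℝ) ∈ I01 := ⟨le_rfl, zero_le_one⟩

theorem one_mem_I01 : (1 : ℝ) ∈ I01 := ⟨zero_le_one, le_rfl⟩

namespace ContTNorm

variable (t : ContTNorm) {x y a b c : ℝ}

theorem zero_mul' (hx : x ∈ I01) : t.mul 0 x = 0 := by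
  rw [t.comm 0 zero_mem_I01 x hx, t.mul_zero' hx]

theorem mul_one' (hx : x ∈ I01) : t.mul x 1 = x := by
  rw [t.comm x hx 1 one_mem_I01, t.one_mul' x hx]

theorem mono_left (ha : a ∈ I01) (hb : b ∈ I01) (hc : c ∈ I01) (h : a ≤ b) :
    t.mul a c ≤ t.mul b c := by
  rw [t.comm a ha c hc, t.comm b hb c hc]
  exact t.mono c hc a ha b hb h

theorem mul_le_left (hx : x ∈ I01) (hy : y ∈ I01) : t.mul x y ≤ x :=
  (t.mono x hx y hy 1 one_mem_I01 hy.2).trans (t.mul_one' hx).le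

theorem mul_le_right (hx : x ∈ I01) (hy : y ∈ I01) : t.mul x y ≤ y :=
  t.comm x hx y hy ▸ t.mul_le_left hy hx

theorem continuousOn_mul_left (hx : x ∈ I01) : ContinuousOn (t.mul x) I01 :=
  t.continuousOn.comp (continuous_const.prodMk continuous_id).continuousOn fun _ hc => ⟨hx, hc⟩

theorem continuousOn_mul_self : ContinuousOn (fun x => t.mul x x) I01 :=
  t.continuousOn.comp (continuous_id.prodMk continuous_id).continuousOn fun _ hc => ⟨hc, hc⟩

end ContTNorm

section Residuum

variable (t : ContTNorm) {x y c : ℝ}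

theorem le_resid_iff (hx : x ∈ I01) (hy : 0 ≤ y) (hc : c ∈ I01) :
    c ≤ resid t x y ↔ t.mul x c ≤ y := by
  have hclosed : IsClosed (I01 ∩ t.mul x ⁻¹' Iic y) :=
    (t.continuousOn_mul_left hx).preimage_isClosed_of_isClosed isClosed_Icc isClosed_Iic
  have hmem : resid t x y ∈ I01 ∩ t.mul x ⁻¹' Iic y :=
    hclosed.csSup_mem ⟨0, zero_mem_I01, by simpa [t.mul_zero' hx] using hy⟩ ⟨1, fun _ h => h.1.2⟩
  exact ⟨fun h => (t.mono x hx c hc _ hmem.1 h).trans hmem.2,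
    fun h => le_csSup ⟨1, fun _ h => h.1.2⟩ ⟨hc, h⟩⟩

theorem le_resid (hx : x ∈ I01) (hy : y ∈ I01) : y ≤ resid t x y :=
  (le_resid_iff t hx hy.1 hy).2 (t.mul_le_right hx hy)

theorem resid_one_left (hy : y ∈ I01) : resid t 1 y = y := by
  have hr := resid_mem_I01 t one_mem_I01 hy
  refine le_antisymm ?_ (le_resid t one_mem_I01 hy)
  simpa [t.one_mul' _ hr] using (le_resid_iff t one_mem_I01 hy.1 hr).1 le_rfl

theorem resid_lukT (hx : x ∈ I01) (hy : y ∈ I01) : resid lukT x y = min 1 (1 - x + y) := by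
  have hr := resid_mem_I01 lukT hx hy
  have hm : min 1 (1 - x + y) ∈ I01 :=
    ⟨le_min zero_le_one (by linarith [hx.2, hy.1]), min_le_left _ _⟩
  refine le_antisymm (le_min hr.2 ?_) ((le_resid_iff lukT hx hy.1 hm).2 ?_)
  · have : max 0 (x + resid lukT x y - 1) ≤ y := (le_resid_iff lukT hx hy.1 hr).1 le_rfl
    linarith [le_max_right 0 (x + resid lukT x y - 1)]
  · exact max_le hy.1 (by linarith [min_le_right 1 (1 - x + y)])

end Residuum

section NilpotentComponent

variable (t : ContTNorm) {x a b c : ℝ}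

def zeroDivisors : Set ℝ := {x | x ∈ I01 ∧ 0 < x ∧ ∃ c ∈ I01, 0 < c ∧ t.mul x c = 0}

/-- The top of the first, nilpotent, component of the ordinal sum decomposition of `t`. -/
def nilTop : ℝ := sSup (zeroDivisors t)

theorem nilTop_nonneg : 0 ≤ nilTop t := Real.sSup_nonneg fun _ hx => hx.2.1.le

theorem nilTop_le_one : nilTop t ≤ 1 := Real.sSup_le (fun _ hx => hx.1.2) zero_le_one

theorem nilTop_mem_I01 : nilTop t ∈ I01 := ⟨nilTop_nonneg t, nilTop_le_one t⟩

theorem Icc_nilTop_subset : Icc 0 (nilTop t) ⊆ I01 := Icc_subset_Icc_right (nilTop_le_one t)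

theorem le_nilTop (hx : x ∈ zeroDivisors t) : x ≤ nilTop t := le_csSup ⟨1, fun _ h => h.1.2⟩ hx

theorem nilTop_pos (hN : (zeroDivisors t).Nonempty) : 0 < nilTop t :=
  hN.some_mem.2.1.trans_le (le_nilTop t hN.some_mem)

theorem mem_zeroDivisors_of_lt_nilTop (hx0 : 0 < x) (hx : x < nilTop t) : x ∈ zeroDivisors t := by
  rcases (zeroDivisors t).eq_empty_or_nonempty with hN | hN
  · simp [nilTop, hN] at hx
    linarith
  obtain ⟨z, ⟨hz, -, c, hc, hc0, hzc⟩, hxz⟩ := exists_lt_of_lt_csSup hN hx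
  have hxI : x ∈ I01 := ⟨hx0.le, hxz.le.trans hz.2⟩
  exact ⟨hxI, hx0, c, hc, hc0,
    le_antisymm (hzc ▸ t.mono_left hxI hz hc hxz.le) (t.maps_to x hxI c hc).1⟩

theorem mem_zeroDivisors_of_mul_mul_eq_zero (hx : x ∈ I01) (hx0 : 0 < x) (hc : c ∈ I01)
    (hc0 : 0 < c) (h : t.mul x (t.mul x c) = 0) : x ∈ zeroDivisors t := by
  rcases (t.maps_to x hx c hc).1.eq_or_lt with h0 | hpos
  · exact ⟨hx, hx0, c, hc, hc0, h0.symm⟩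
  · exact ⟨hx, hx0, _, t.maps_to x hx c hc, hpos, h⟩

theorem nilTop_mul_self : t.mul (nilTop t) (nilTop t) = nilTop t := by
  have hβ := nilTop_mem_I01 t
  refine le_antisymm (t.mul_le_left hβ hβ) (not_lt.1 fun hlt => ?_)
  have hβ1 : nilTop t < 1 := hβ.2.lt_of_ne fun h => by
    rw [h, t.one_mul' 1 one_mem_I01] at hlt
    exact hlt.false
  -- by continuity some `z > nilTop t` still has `z * z < nilTop t`, so `z` is a zero divisor
  have hev : ∀ᶠ z in 𝓝[Ioc (nilTop t) 1] nilTop t, t.mul z z < nilTop t :=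
    ((t.continuousOn_mul_self _ hβ).mono (Ioc_subset_Icc_self.trans
      (Icc_subset_Icc_left hβ.1))).tendsto.eventually_lt_const hlt
  have := left_nhdsWithin_Ioc_neBot hβ1
  obtain ⟨z, hzz, hz⟩ := (hev.and self_mem_nhdsWithin).exists
  have hzI : z ∈ I01 := ⟨hβ.1.trans hz.1.le, hz.2⟩
  have hz0 : 0 < z := hβ.1.trans_lt hz.1
  refine (le_nilTop t ?_).not_gt hz.1
  rcases (t.maps_to z hzI z hzI).1.eq_or_lt with h0 | hpos
  · exact mem_zeroDivisors_of_mul_mul_eq_zero t hzI hz0 one_mem_I01 one_pos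
      (by rw [t.mul_one' hzI, ← h0])
  · obtain ⟨-, -, c, hc, hc0, hzzc⟩ := mem_zeroDivisors_of_lt_nilTop t hpos hzz
    exact mem_zeroDivisors_of_mul_mul_eq_zero t hzI hz0 hc hc0
      (by rw [← t.assoc z hzI z hzI c hc, hzzc])

theorem nilTop_mul (hx : x ∈ Icc 0 (nilTop t)) : t.mul (nilTop t) x = x := by
  have hβ := nilTop_mem_I01 t
  obtain ⟨d, hd, rfl⟩ := intermediate_value_Icc (nilTop_nonneg t)
    ((t.continuousOn_mul_left hβ).mono (Icc_nilTop_subset t))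
    (by rwa [t.mul_zero' hβ, nilTop_mul_self t])
  rw [← t.assoc _ hβ _ hβ _ (Icc_nilTop_subset t hd), nilTop_mul_self t]

theorem mul_eq_of_nilTop_le (ha : a ∈ I01) (hβa : nilTop t ≤ a) (hb : b ∈ Icc 0 (nilTop t)) :
    t.mul a b = b := by
  have hbI := Icc_nilTop_subset t hb
  refine le_antisymm (t.mul_le_right ha hbI) ?_
  calc b = t.mul (nilTop t) b := (nilTop_mul t hb).symm
    _ ≤ t.mul a b := t.mono_left (nilTop_mem_I01 t) ha hbI hβa

theorem nilTop_le_mul (ha : a ∈ I01) (hb : b ∈ I01) (hβa : nilTop t ≤ a) (hβb : nilTop t ≤ b) :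
    nilTop t ≤ t.mul a b :=
  calc nilTop t = t.mul (nilTop t) (nilTop t) := (nilTop_mul_self t).symm
    _ ≤ t.mul a (nilTop t) := t.mono_left (nilTop_mem_I01 t) ha (nilTop_mem_I01 t) hβa
    _ ≤ t.mul a b := t.mono a ha _ (nilTop_mem_I01 t) b hb hβb

theorem lt_nilTop_of_mem_zeroDivisors (hx : x ∈ zeroDivisors t) : x < nilTop t := by
  obtain ⟨hxI, hx0, c, hc, hc0, hxc⟩ := hx
  refine (le_nilTop t ⟨hxI, hx0, c, hc, hc0, hxc⟩).lt_of_ne fun h => ?_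
  have hm : min c (nilTop t) ∈ Icc 0 (nilTop t) :=
    ⟨le_min hc0.le (nilTop_nonneg t), min_le_right _ _⟩
  have : t.mul (nilTop t) (min c (nilTop t)) ≤ 0 :=
    h ▸ (t.mono x hxI _ (Icc_nilTop_subset t (h ▸ hm)) c hc (min_le_left _ _)).trans hxc.le
  rw [nilTop_mul t hm] at this
  exact this.not_gt (lt_min hc0 (hx0.trans_le h.le))

end NilpotentComponent

section NilpotentComponentAlgebra

variable (t : ContTNorm)

instance : Fact (0 ≤ nilTop t) := ⟨nilTop_nonneg t⟩

instance : CommMonoidWithZero (Icc (0 : ℝ) (nilTop t)) where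
  mul x y := ⟨t.mul x y, (t.maps_to _ (Icc_nilTop_subset t x.2) _ (Icc_nilTop_subset t y.2)).1,
    (t.mul_le_left (Icc_nilTop_subset t x.2) (Icc_nilTop_subset t y.2)).trans x.2.2⟩
  one := ⟨nilTop t, nilTop_nonneg t, le_rfl⟩
  zero := ⟨0, le_rfl, nilTop_nonneg t⟩
  mul_assoc x y z := Subtype.ext <| t.assoc _ (Icc_nilTop_subset t x.2) _
    (Icc_nilTop_subset t y.2) _ (Icc_nilTop_subset t z.2)
  one_mul x := Subtype.ext <| nilTop_mul t x.2
  mul_one x := Subtype.ext <| (t.comm _ (Icc_nilTop_subset t x.2) _ (nilTop_mem_I01 t)).trans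
    (nilTop_mul t x.2)
  zero_mul x := Subtype.ext <| t.zero_mul' (Icc_nilTop_subset t x.2)
  mul_zero x := Subtype.ext <| t.mul_zero' (Icc_nilTop_subset t x.2)
  mul_comm x y := Subtype.ext <| t.comm _ (Icc_nilTop_subset t x.2) _ (Icc_nilTop_subset t y.2)

instance : IsOrderedMonoid (Icc (0 : ℝ) (nilTop t)) where
  mul_le_mul_left x y h z := t.mono_left (Icc_nilTop_subset t x.2) (Icc_nilTop_subset t y.2)
    (Icc_nilTop_subset t z.2) h

instance : ContinuousMul (Icc (0 : ℝ) (nilTop t)) where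
  continuous_mul := Continuous.subtype_mk (t.continuousOn.comp_continuous
    (f := fun p : Icc (0 : ℝ) (nilTop t) × Icc (0 : ℝ) (nilTop t) => ((p.1 : ℝ), (p.2 : ℝ)))
    (by fun_prop) fun p => ⟨Icc_nilTop_subset t p.1.2, Icc_nilTop_subset t p.2.2⟩) _

instance : IsNilpotentTNorm (Icc (0 : ℝ) (nilTop t)) where
  le_one x := x.2.2
  exists_ne_zero_mul_eq_zero x hx := by
    have hx' : (x : ℝ) < nilTop t := hx
    have hβ : 0 < nilTop t := x.2.1.trans_lt hx'
    rcases x.2.1.eq_or_lt with h0 | h0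
    · refine ⟨1, fun h => hβ.ne' (congrArg Subtype.val h), ?_⟩
      rw [mul_one]
      exact Subtype.ext h0.symm
    obtain ⟨hxI, -, c, hc, hc0, hxc⟩ := mem_zeroDivisors_of_lt_nilTop t h0 hx'
    have hm : min c (nilTop t) ∈ Icc 0 (nilTop t) := ⟨le_min hc0.le hβ.le, min_le_right _ _⟩
    refine ⟨⟨_, hm⟩, fun h => (lt_min hc0 hβ).ne' (congrArg Subtype.val h), Subtype.ext ?_⟩
    exact le_antisymm ((t.mono _ hxI _ (Icc_nilTop_subset t hm) c hc (min_le_left _ _)).trans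
      hxc.le) (t.maps_to _ hxI _ (Icc_nilTop_subset t hm)).1

theorem nontrivial_Icc_nilTop (hN : (zeroDivisors t).Nonempty) :
    Nontrivial (Icc (0 : ℝ) (nilTop t)) :=
  ⟨⟨0, 1, fun h => (nilTop_pos t hN).ne (congrArg Subtype.val h)⟩⟩

end NilpotentComponentAlgebra

section LukasiewiczQuotient

open NilpotentTNorm

variable (t : ContTNorm) {x a b : ℝ}

def toNil : ℝ → Icc (0 : ℝ) (nilTop t) := projIcc 0 (nilTop t) (nilTop_nonneg t)

theorem toNil_of_mem (hx : x ∈ Icc 0 (nilTop t)) : toNil t x = ⟨x, hx⟩ := projIcc_of_mem _ hx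

theorem toNil_of_nilTop_le (hx : nilTop t ≤ x) : toNil t x = 1 := projIcc_of_right_le _ hx

theorem le_toNil_iff {c : Icc (0 : ℝ) (nilTop t)} (hx : 0 ≤ x) : c ≤ toNil t x ↔ (c : ℝ) ≤ x := by
  rcases le_total x (nilTop t) with h | h
  · rw [toNil_of_mem t ⟨hx, h⟩]
    exact Iff.rfl
  · rw [toNil_of_nilTop_le t h]
    exact iff_of_true c.2.2 (c.2.2.trans h)

theorem toNil_mul (ha : a ∈ I01) (hb : b ∈ I01) : toNil t (t.mul a b) = toNil t a * toNil t b := by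
  rcases le_total a (nilTop t) with ha' | ha' <;> rcases le_total b (nilTop t) with hb' | hb'
  · rw [toNil_of_mem t ⟨ha.1, ha'⟩, toNil_of_mem t ⟨hb.1, hb'⟩,
      toNil_of_mem t ⟨(t.maps_to a ha b hb).1, (t.mul_le_left ha hb).trans ha'⟩]
    rfl
  · rw [t.comm a ha b hb, mul_eq_of_nilTop_le t hb hb' ⟨ha.1, ha'⟩, toNil_of_nilTop_le t hb',
      mul_one]
  · rw [mul_eq_of_nilTop_le t ha ha' ⟨hb.1, hb'⟩, toNil_of_nilTop_le t ha', one_mul]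
  · rw [toNil_of_nilTop_le t (nilTop_le_mul t ha hb ha' hb'), toNil_of_nilTop_le t ha',
      toNil_of_nilTop_le t hb', mul_one]

theorem toNil_resid (ha : a ∈ I01) (hb : b ∈ I01) :
    toNil t (resid t a b) = tneg (toNil t a * tneg (toNil t b)) := by
  refine eq_of_forall_le_iff fun c => ?_
  have hc := Icc_nilTop_subset t c.2
  have hac : t.mul a c ∈ Icc 0 (nilTop t) :=
    ⟨(t.maps_to a ha c hc).1, (t.mul_le_right ha hc).trans c.2.2⟩
  have hmul : toNil t a * c = ⟨_, hac⟩ := by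
    rw [← toNil_of_mem t hac, toNil_mul t ha hc, toNil_of_mem t c.2]
  rw [le_toNil_iff t (resid_mem_I01 t ha hb).1, le_resid_iff t ha hb.1 hc, ← mul_le_iff_le_tneg,
    hmul, le_toNil_iff t hb.1]

def lukMap (x : ℝ) : ℝ := toLuk (toNil t x)

theorem lukMap_mem_I01 (x : ℝ) : lukMap t x ∈ I01 := ⟨toLuk_nonneg _, toLuk_le_one _⟩

theorem lukMap_zero : lukMap t 0 = 0 := by
  rw [lukMap, toNil_of_mem t ⟨le_rfl, nilTop_nonneg t⟩]
  exact toLuk_zero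

variable [Nontrivial (Icc (0 : ℝ) (nilTop t))]

theorem lukMap_mul (ha : a ∈ I01) (hb : b ∈ I01) :
    lukMap t (t.mul a b) = lukT.mul (lukMap t a) (lukMap t b) := by
  rw [lukMap, toNil_mul t ha hb, toLuk_mul]
  rfl

theorem lukMap_resid (ha : a ∈ I01) (hb : b ∈ I01) :
    lukMap t (resid t a b) = resid lukT (lukMap t a) (lukMap t b) := by
  rw [lukMap, toNil_resid t ha hb, toLuk_tneg_mul_tneg,
    resid_lukT (lukMap_mem_I01 t a) (lukMap_mem_I01 t b)]
  rfl

theorem lukMap_lt_one (hx0 : 0 ≤ x) (hx : x < nilTop t) :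
    lukMap t x < 1 :=
  toLuk_lt_one (by rw [toNil_of_mem t ⟨hx0, hx.le⟩]; exact hx)

end LukasiewiczQuotient

section Semantics

variable {t t' : ContTNorm}

theorem eval_mem (T : TruthAlg t) {v : ℕ → ℝ} (hv : IsValuation t T v) (α : Formula) :
    eval t v α ∈ T.carrier := by
  induction α with
  | var i => exact hv i
  | bot => exact T.zero_mem
  | conj a b iha ihb => exact T.mul_mem _ iha _ ihb
  | impl a b iha ihb => exact T.resid_mem _ iha _ ihb

structure IsTruthHom (t t' : ContTNorm) (S : Set ℝ) (f : ℝ → ℝ) : Prop where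
  map_zero : f 0 = 0
  map_mul : ∀ a ∈ S, ∀ b ∈ S, f (t.mul a b) = t'.mul (f a) (f b)
  map_resid : ∀ a ∈ S, ∀ b ∈ S, f (resid t a b) = resid t' (f a) (f b)

theorem IsTruthHom.mono {S S' : Set ℝ} {f : ℝ → ℝ} (hf : IsTruthHom t t' S f) (h : S' ⊆ S) :
    IsTruthHom t t' S' f :=
  ⟨hf.map_zero, fun a ha b hb => hf.map_mul a (h ha) b (h hb),
    fun a ha b hb => hf.map_resid a (h ha) b (h hb)⟩

theorem IsTruthHom.eval_comp {T : TruthAlg t} {f : ℝ → ℝ} (hf : IsTruthHom t t' T.carrier f)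
    {v : ℕ → ℝ} (hv : IsValuation t T v) (α : Formula) : eval t' (f ∘ v) α = f (eval t v α) := by
  induction α with
  | var i => rfl
  | bot => exact hf.map_zero.symm
  | conj a b iha ihb =>
    rw [eval, eval, iha, ihb, hf.map_mul _ (eval_mem T hv a) _ (eval_mem T hv b)]
  | impl a b iha ihb =>
    rw [eval, eval, iha, ihb, hf.map_resid _ (eval_mem T hv a) _ (eval_mem T hv b)]

theorem IsTruthHom.taut_subset {T : TruthAlg t} {f : ℝ → ℝ} (hf : IsTruthHom t t' T.carrier f)
    (hI : ∀ a ∈ T.carrier, f a ∈ I01) (h1 : ∀ a ∈ T.carrier, f a = 1 → a = 1) :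
    Taut t' (fullAlg t') ⊆ Taut t T := fun α hα _ hv =>
  h1 _ (eval_mem T hv α) (hf.eval_comp hv α ▸ hα _ fun i => hI _ (hv i))

theorem isTruthHom_id_zero_one (t t' : ContTNorm) : IsTruthHom t t' {0, 1} id := by
  have hI : ∀ b ∈ ({0, 1} : Set ℝ), b ∈ I01 := by
    rintro b (rfl | rfl)
    exacts [zero_mem_I01, one_mem_I01]
  refine ⟨rfl, fun a ha b hb => ?_, fun a ha b hb => ?_⟩ <;> rcases ha with rfl | rfl
  · exact (t.zero_mul' (hI b hb)).trans (t'.zero_mul' (hI b hb)).symm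
  · exact (t.one_mul' b (hI b hb)).trans (t'.one_mul' b (hI b hb)).symm
  · exact (resid_eq_one_of_le t zero_mem_I01 (hI b hb) (hI b hb).1).trans
      (resid_eq_one_of_le t' zero_mem_I01 (hI b hb) (hI b hb).1).symm
  · exact (resid_one_left t (hI b hb)).trans (resid_one_left t' (hI b hb)).symm

theorem isTruthHom_lukMap (t : ContTNorm) [Nontrivial (Icc (0 : ℝ) (nilTop t))] :
    IsTruthHom t lukT I01 (lukMap t) :=
  ⟨lukMap_zero t, fun _ ha _ hb => lukMap_mul t ha hb, fun _ ha _ hb => lukMap_resid t ha hb⟩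

end Semantics

section Robust

variable (t : ContTNorm) {u w : ℝ}

def IsRobust (u : ℝ) : Prop := u ∈ I01 ∧ ∀ c ∈ I01, 0 < c → 0 < t.mul u c

theorem isRobust_one : IsRobust t 1 :=
  ⟨one_mem_I01, fun c hc hc0 => (t.one_mul' c hc).symm ▸ hc0⟩

variable {t}

theorem IsRobust.pos (hu : IsRobust t u) : 0 < u := by
  simpa [t.mul_one' hu.1] using hu.2 1 one_mem_I01 one_pos

theorem IsRobust.mul (hu : IsRobust t u) (hw : IsRobust t w) : IsRobust t (t.mul u w) := by
  refine ⟨t.maps_to u hu.1 w hw.1, fun c hc hc0 => ?_⟩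
  rw [t.assoc u hu.1 w hw.1 c hc]
  exact hu.2 _ (t.maps_to w hw.1 c hc) (hw.2 c hc hc0)

theorem isRobust_resid (hu : u ∈ I01) (hw : IsRobust t w) : IsRobust t (resid t u w) := by
  have hr := resid_mem_I01 t hu hw.1
  exact ⟨hr, fun c hc hc0 => (hw.2 c hc hc0).trans_le (t.mono_left hw.1 hr hc (le_resid t hu hw.1))⟩

theorem IsRobust.resid_zero (hu : IsRobust t u) : resid t u 0 = 0 := by
  have hr := resid_mem_I01 t hu.1 zero_mem_I01
  refine le_antisymm (not_lt.1 fun hpos => ?_) hr.1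
  exact ((le_resid_iff t hu.1 le_rfl hr).1 le_rfl).not_gt (hu.2 _ hr hpos)

theorem eval_eq_zero_or_isRobust {v w : ℕ → ℝ} (hv : ∀ i, IsRobust t (v i))
    (hw : ∀ i, IsRobust t (w i)) (α : Formula) :
    (eval t v α = 0 ∧ eval t w α = 0) ∨ (IsRobust t (eval t v α) ∧ IsRobust t (eval t w α)) := by
  have hI : ∀ {u : ℕ → ℝ}, (∀ i, IsRobust t (u i)) → ∀ β, eval t u β ∈ I01 :=
    fun hu β => eval_mem (fullAlg t) (fun i => (hu i).1) β
  induction α with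
  | var i => exact Or.inr ⟨hv i, hw i⟩
  | bot => exact Or.inl ⟨rfl, rfl⟩
  | conj a b iha ihb =>
    simp only [eval]
    rcases iha with ⟨ha, ha'⟩ | ⟨ha, ha'⟩
    · rw [ha, ha', t.zero_mul' (hI hv b), t.zero_mul' (hI hw b)]
      exact Or.inl ⟨rfl, rfl⟩
    rcases ihb with ⟨hb, hb'⟩ | ⟨hb, hb'⟩
    · rw [hb, hb', t.mul_zero' (hI hv a), t.mul_zero' (hI hw a)]
      exact Or.inl ⟨rfl, rfl⟩
    · exact Or.inr ⟨ha.mul hb, ha'.mul hb'⟩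
  | impl a b iha ihb =>
    simp only [eval]
    rcases iha with ⟨ha, ha'⟩ | ⟨ha, ha'⟩
    · rw [ha, ha', resid_eq_one_of_le t zero_mem_I01 (hI hv b) (hI hv b).1,
        resid_eq_one_of_le t zero_mem_I01 (hI hw b) (hI hw b).1]
      exact Or.inr ⟨isRobust_one t, isRobust_one t⟩
    rcases ihb with ⟨hb, hb'⟩ | ⟨hb, hb'⟩
    · rw [hb, hb', ha.resid_zero, ha'.resid_zero]
      exact Or.inl ⟨rfl, rfl⟩
    · exact Or.inr ⟨isRobust_resid (hI hv a) hb, isRobust_resid (hI hw a) hb'⟩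

theorem mem_zeroDivisors_of_P2 {T : TruthAlg t} (h : P2 (Taut t T)) {x : ℝ} (hx : x ∈ T.carrier)
    (hx0 : x ≠ 0) (hx1 : x ≠ 1) : x ∈ zeroDivisors t := by
  have hxI := T.subset hx
  by_contra hzd
  have hrob : IsRobust t x := ⟨hxI, fun c hc hc0 => (t.maps_to x hxI c hc).1.lt_of_ne
    fun h0 => hzd ⟨hxI, hxI.1.lt_of_ne (Ne.symm hx0), c, hc, hc0, h0.symm⟩⟩
  obtain ⟨α, hpos, hzero⟩ := h t T rfl (fun _ => x) (fun _ => 1) (fun _ => hx)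
    (fun _ => T.one_mem) (fun h => hx1 (congrFun h 0))
  rcases eval_eq_zero_or_isRobust (fun _ => hrob) (fun _ => isRobust_one t) α with
    ⟨h0, -⟩ | ⟨-, hr⟩
  · exact hpos.ne' h0
  · exact hr.pos.ne' hzero

end Robust

/-- Any real-valued logic satisfying P2 extends Łukasiewicz logic. -/
theorem P2_implies_extends_Lukasiewicz (t : ContTNorm) (T : TruthAlg t)
    (h : P2 (Taut t T)) : Taut lukT (fullAlg lukT) ⊆ Taut t T := by
  have hzd : ∀ x ∈ T.carrier, x ≠ 0 → x ≠ 1 → x ∈ zeroDivisors t :=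
    fun x hx => mem_zeroDivisors_of_P2 h hx
  rcases (zeroDivisors t).eq_empty_or_nonempty with hN | hN
  · have h01 : T.carrier ⊆ {0, 1} := fun x hx => by
      by_contra hx'
      simp only [mem_insert_iff, mem_singleton_iff, not_or] at hx'
      simpa [hN] using hzd x hx hx'.1 hx'.2
    exact ((isTruthHom_id_zero_one t lukT).mono h01).taut_subset (fun a ha => T.subset ha)
      fun _ _ => id
  · have := nontrivial_Icc_nilTop t hN
    refine ((isTruthHom_lukMap t).mono T.subset).taut_subset (fun a _ => lukMap_mem_I01 t a)
      fun a ha h1 => by_contra fun ha1 => (lukMap_lt_one t (T.subset ha).1 ?_).ne h1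
    rcases (T.subset ha).1.eq_or_lt with rfl | ha0
    · exact nilTop_pos t hN
    · exact lt_nilTop_of_mem_zeroDivisors t (hzd a ha ha0.ne' ha1)
end
end

section
/- Łukasiewicz logic satisfies P2 over its standard algebra: for any two distinct valuations μ ≠ ν into ([0,1],⊙), where ⊙ is the Łukasiewicz t-norm, there exists a formula α with μ(α) > 0 and ν(α) = 0. -/
open Set

noncomputable section

/-! The pairs `(μ α, ν α)` form a subset of `[0,1]²` closed under `¬x = 1 - x` and under the
square `x ⊙ x = max 0 (2x - 1)`, hence also under doubling `min 1 (2x) = ¬(¬x ⊙ ¬x)`.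
Start from a variable on which `μ` and `ν` differ, negated if necessary so that `μ` is larger.
Squaring when both values are `≥ 1/2` and doubling when both are `≤ 1/2` doubles their gap,
which cannot exceed `1`; so eventually the values straddle `1/2`, and then one squaring followed
by repeated doubling reaches the pair `(1, 0)`. -/

lemma exists_one_lt_two_pow_mul {x : ℝ} (hx : 0 < x) : ∃ n : ℕ, 1 < 2 ^ n * x := by
  obtain ⟨n, hn⟩ := pow_unbounded_of_one_lt x⁻¹ one_lt_two
  exact ⟨n, (inv_lt_iff_one_lt_mul₀ hx).1 hn⟩

lemma one_sub_max_zero_two_mul_one_sub (x : ℝ) : 1 - max 0 (2 * (1 - x) - 1) = min 1 (2 * x) := by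
  rw [max_def, min_def]
  split_ifs <;> linarith

structure IsLukClosed (S : Set (ℝ × ℝ)) : Prop where
  subset : S ⊆ I01 ×ˢ I01
  one_sub_mem : ∀ {a b : ℝ}, (a, b) ∈ S → (1 - a, 1 - b) ∈ S
  sq_mem : ∀ {a b : ℝ}, (a, b) ∈ S → (max 0 (2 * a - 1), max 0 (2 * b - 1)) ∈ S

namespace IsLukClosed

variable {S : Set (ℝ × ℝ)}

lemma double_mem (hS : IsLukClosed S) {a b : ℝ} (h : (a, b) ∈ S) :
    (min 1 (2 * a), min 1 (2 * b)) ∈ S := by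
  simpa only [one_sub_max_zero_two_mul_one_sub] using
    hS.one_sub_mem (hS.sq_mem (hS.one_sub_mem h))

lemma one_zero_mem_of_pos (hS : IsLukClosed S) {c : ℝ} (h : (c, 0) ∈ S) (hc : 0 < c) :
    ((1 : ℝ), (0 : ℝ)) ∈ S := by
  obtain ⟨n, hn⟩ := exists_one_lt_two_pow_mul hc
  induction n generalizing c with
  | zero => linarith [(hS.subset h).1.2]
  | succ n ih =>
    have hd := hS.double_mem h
    rw [mul_zero, min_eq_right zero_le_one] at hd
    rcases le_or_gt 1 (2 * c) with hc2 | hc2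
    · rwa [min_eq_left hc2] at hd
    · rw [min_eq_right hc2.le] at hd
      exact ih hd (by positivity) (by rw [pow_succ] at hn; linarith)

lemma one_zero_mem_of_gap (hS : IsLukClosed S) (n : ℕ) {a b : ℝ} (h : (a, b) ∈ S)
    (hgap : 1 < 2 ^ n * (a - b)) : ((1 : ℝ), (0 : ℝ)) ∈ S := by
  induction n generalizing a b with
  | zero =>
    obtain ⟨⟨-, ha1⟩, hb0, -⟩ := hS.subset h
    linarith
  | succ n ih =>
    have hgap' : 1 < 2 ^ n * (2 * a - 2 * b) := by rw [pow_succ] at hgap; linarith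
    have hlt : b < a := sub_pos.1 (pos_of_mul_pos_right (one_pos.trans hgap) (by positivity))
    rcases le_or_gt (1 / 2) b with hb | hb
    · have hsq := hS.sq_mem h
      rw [max_eq_right (by linarith), max_eq_right (by linarith)] at hsq
      exact ih hsq (by linarith)
    rcases le_or_gt a (1 / 2) with ha | ha
    · have hd := hS.double_mem h
      rw [min_eq_right (by linarith), min_eq_right (by linarith)] at hd
      exact ih hd hgap'
    · have hsq := hS.sq_mem h
      rw [max_eq_right (by linarith), max_eq_left (by linarith)] at hsq
      exact hS.one_zero_mem_of_pos hsq (by linarith)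

lemma one_zero_mem_of_ne (hS : IsLukClosed S) {a b : ℝ} (h : (a, b) ∈ S) (hab : a ≠ b) :
    ((1 : ℝ), (0 : ℝ)) ∈ S := by
  rcases hab.lt_or_gt with hlt | hgt
  · obtain ⟨n, hn⟩ := exists_one_lt_two_pow_mul (sub_pos.2 hlt)
    exact hS.one_zero_mem_of_gap n (hS.one_sub_mem h) (by linarith)
  · obtain ⟨n, hn⟩ := exists_one_lt_two_pow_mul (sub_pos.2 hgt)
    exact hS.one_zero_mem_of_gap n h hn

end IsLukClosed

lemma eval_mem_I01 (t : ContTNorm) {v : ℕ → ℝ} (hv : ∀ i, v i ∈ I01) :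
    ∀ φ, eval t v φ ∈ I01
  | .var i => hv i
  | .bot => ⟨le_rfl, zero_le_one⟩
  | .conj a b => t.maps_to _ (eval_mem_I01 t hv a) _ (eval_mem_I01 t hv b)
  | .impl a b => resid_mem_I01 t (eval_mem_I01 t hv a) (eval_mem_I01 t hv b)

lemma lukT_resid {x y : ℝ} (hx : x ≤ 1) (hy : 0 ≤ y) :
    resid lukT x y = min 1 (1 - x + y) := by
  have hset : {c | c ∈ I01 ∧ lukT.mul x c ≤ y} = Icc 0 (min 1 (1 - x + y)) := by
    ext c
    simp only [lukT, I01, mem_ofPred_eq, mem_Icc, le_min_iff, max_le_iff, hy, true_and]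
    exact ⟨fun ⟨⟨h0, h1⟩, h2⟩ => ⟨h0, h1, by linarith⟩,
      fun ⟨h0, h1, h2⟩ => ⟨⟨h0, h1⟩, by linarith⟩⟩
  rw [resid, hset, csSup_Icc (le_min zero_le_one (by linarith))]

lemma eval_lukT_neg {v : ℕ → ℝ} (hv : ∀ i, v i ∈ I01) (φ : Formula) :
    eval lukT v (φ.impl .bot) = 1 - eval lukT v φ := by
  have hφ := eval_mem_I01 lukT hv φ
  rw [eval, eval, lukT_resid hφ.2 le_rfl, add_zero, min_eq_right (by linarith [hφ.1])]

lemma eval_lukT_conj_self (v : ℕ → ℝ) (φ : Formula) :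
    eval lukT v (φ.conj φ) = max 0 (2 * eval lukT v φ - 1) := by
  rw [eval, lukT, two_mul]

def jointValues (t : ContTNorm) (v w : ℕ → ℝ) : Set (ℝ × ℝ) :=
  range fun φ : Formula => (eval t v φ, eval t w φ)

lemma isLukClosed_jointValues {v w : ℕ → ℝ} (hv : ∀ i, v i ∈ I01) (hw : ∀ i, w i ∈ I01) :
    IsLukClosed (jointValues lukT v w) where
  subset := by
    rintro _ ⟨φ, rfl⟩
    exact ⟨eval_mem_I01 lukT hv φ, eval_mem_I01 lukT hw φ⟩
  one_sub_mem := by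
    rintro a b ⟨φ, hφ⟩
    obtain ⟨rfl, rfl⟩ := Prod.mk.inj hφ
    exact ⟨φ.impl .bot, Prod.ext (eval_lukT_neg hv φ) (eval_lukT_neg hw φ)⟩
  sq_mem := by
    rintro a b ⟨φ, hφ⟩
    obtain ⟨rfl, rfl⟩ := Prod.mk.inj hφ
    exact ⟨φ.conj φ, Prod.ext (eval_lukT_conj_self v φ) (eval_lukT_conj_self w φ)⟩

/-- Łukasiewicz logic satisfies P2 over its standard algebra: any two distinct
valuations into `([0,1], ⊙)` are separated by some formula. -/
theorem Lukasiewicz_separates (v w : ℕ → ℝ) (hv : ∀ i, v i ∈ I01)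
    (hw : ∀ i, w i ∈ I01) (hvw : v ≠ w) :
    ∃ α : Formula, 0 < eval lukT v α ∧ eval lukT w α = 0 := by
  obtain ⟨i, hi⟩ := Function.ne_iff.mp hvw
  obtain ⟨α, hα⟩ :=
    (isLukClosed_jointValues hv hw).one_zero_mem_of_ne ⟨.var i, rfl⟩ hi
  obtain ⟨hαv, hαw⟩ := Prod.mk.inj hα
  exact ⟨α, hαv ▸ one_pos, hαw⟩

end
end

section
/- For every integer n ≥ 1 and any two distinct points p ≠ q in [0,1]^n, there exists a (⊙,¬)-term function λ : [0,1]^n → [0,1] such that λ(q) = 0 and λ(p) > 0. -/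
/-!
A term `f` with `0 ≤ f q < f p ≤ 1` can have its gap `f p - f q` doubled by a term:
`f ⊕ f = min 1 (2f)` when both values lie in `[0, 1/2]`, and `f ⊙ f = max 0 (2f - 1)` when
both lie in `(1/2, 1]`. Start from the coordinate `x i` or `1 - x i` at which `p` and `q`
differ. Since the gap cannot exceed `1`, after finitely many doublings the values straddle
`1/2`, and then `f ⊙ f` vanishes at `q` but not at `p`.
-/

/-- A `(⊙,¬)`-term function in `n` variables: a member of the smallest set of
functions `[0,1]^n → [0,1]` (here: `(Fin n → ℝ) → ℝ`) containing the coordinate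
projections and closed under pointwise Łukasiewicz conjunction
`(f,g) ↦ max 0 (f + g - 1)` and negation `f ↦ 1 - f`. -/
inductive IsLukTerm {n : ℕ} : ((Fin n → ℝ) → ℝ) → Prop
  | proj (i : Fin n) : IsLukTerm (fun x => x i)
  | conj {f g : (Fin n → ℝ) → ℝ} : IsLukTerm f → IsLukTerm g →
      IsLukTerm (fun x => max 0 (f x + g x - 1))
  | neg {f : (Fin n → ℝ) → ℝ} : IsLukTerm f → IsLukTerm (fun x => 1 - f x)

namespace IsLukTerm

variable {n : ℕ} {f : (Fin n → ℝ) → ℝ}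

theorem conj_self (hf : IsLukTerm f) : IsLukTerm fun x => max 0 (2 * f x - 1) := by
  convert hf.conj hf using 3 with x
  ring

theorem disj_self (hf : IsLukTerm f) : IsLukTerm fun x => min 1 (2 * f x) := by
  convert (hf.neg.conj hf.neg).neg using 2 with x
  rw [← min_sub_sub_left]
  ring_nf

theorem exists_separating_of_one_le_two_pow_mul (k : ℕ) (hf : IsLukTerm f)
    {p q : Fin n → ℝ} (hq : 0 ≤ f q) (hp : f p ≤ 1) (hgap : 1 ≤ 2 ^ k * (f p - f q)) :
    ∃ lam : (Fin n → ℝ) → ℝ, IsLukTerm lam ∧ lam q = 0 ∧ 0 < lam p := by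
  induction k generalizing f with
  | zero =>
    rw [pow_zero, one_mul] at hgap
    exact ⟨f, hf, by linarith, by linarith⟩
  | succ k ih =>
    have hlt : f q < f p := sub_pos.mp (pos_of_mul_pos_right (by linarith) (by positivity))
    rw [pow_succ, mul_assoc] at hgap
    by_cases hq_half : f q ≤ 1 / 2
    · by_cases hp_half : f p ≤ 1 / 2
      · have hq' : min 1 (2 * f q) = 2 * f q := min_eq_right (by linarith)
        have hp' : min 1 (2 * f p) = 2 * f p := min_eq_right (by linarith)
        exact ih hf.disj_self (by rw [hq']; linarith) (by rw [hp']; linarith)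
          (by rw [hp', hq']; linarith)
      · exact ⟨_, hf.conj_self, max_eq_left (by linarith), lt_max_of_lt_right (by linarith)⟩
    · have hq' : max 0 (2 * f q - 1) = 2 * f q - 1 := max_eq_right (by linarith)
      have hp' : max 0 (2 * f p - 1) = 2 * f p - 1 := max_eq_right (by linarith)
      exact ih hf.conj_self (by rw [hq']; linarith) (by rw [hp']; linarith)
        (by rw [hp', hq']; linarith)

theorem exists_separating (hf : IsLukTerm f) {p q : Fin n → ℝ} (hq : 0 ≤ f q)
    (hp : f p ≤ 1) (hlt : f q < f p) :
    ∃ lam : (Fin n → ℝ) → ℝ, IsLukTerm lam ∧ lam q = 0 ∧ 0 < lam p := by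
  obtain ⟨k, hk⟩ := pow_unbounded_of_one_lt (f p - f q)⁻¹ one_lt_two
  refine hf.exists_separating_of_one_le_two_pow_mul k hq hp ?_
  rw [inv_lt_iff_one_lt_mul₀ (sub_pos.mpr hlt)] at hk
  linarith

end IsLukTerm

theorem lukTerm_separates_points_general (n : ℕ) (p q : Fin n → ℝ)
    (hp : ∀ i, p i ∈ Set.Icc (0:ℝ) 1) (hq : ∀ i, q i ∈ Set.Icc (0:ℝ) 1)
    (hpq : p ≠ q) :
    ∃ lam : (Fin n → ℝ) → ℝ, IsLukTerm lam ∧ lam q = 0 ∧ 0 < lam p := by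
  obtain ⟨i, hi⟩ := Function.ne_iff.mp hpq
  rcases hi.lt_or_gt with hlt | hgt
  · exact (IsLukTerm.proj i).neg.exists_separating (sub_nonneg.mpr (hq i).2)
      (sub_le_self _ (hp i).1) (sub_lt_sub_left hlt 1)
  · exact (IsLukTerm.proj i).exists_separating (hq i).1 (hp i).2 hgt

/-- Any two distinct points of `[0,1]^n` are separated by a `(⊙,¬)`-term function
vanishing at one and positive at the other. -/
theorem lukTerm_separates_points (n : ℕ) (hn : 1 ≤ n) (p q : Fin n → ℝ)
    (hp : ∀ i, p i ∈ Set.Icc (0:ℝ) 1) (hq : ∀ i, q i ∈ Set.Icc (0:ℝ) 1)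
    (hpq : p ≠ q) :
    ∃ lam : (Fin n → ℝ) → ℝ, IsLukTerm lam ∧ lam q = 0 ∧ 0 < lam p :=
  lukTerm_separates_points_general n p q hp hq hpq
end
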